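/- Fix a monomial order ≺ on ℕ² whose initial segments are finite. Let a and b be nonnegative integers with a < b, let C ∩ ℕ² = {(x, y) ∈ ℕ² : y ≤ x} be the integer points of the cone of ℚ₊² generated by (1,0) and (1,1), and let S = {k·(1,1) : k ∈ ℕ} ∪ {(x, y) ∈ ℕ² : y ≤ x and (x > b or y > a)}. Then S is a C-semigroup satisfying the extended Wilf conjecture: n(S)·e(S) ≥ N(Fb(S)) + 1. -/

import Mathlib

/-- `S ⊆ ℕ^p` contains `0` and is closed under addition. -/
def IsSubmonoidSet {p : ℕ} (S : Set (Fin p → ℕ)) : Prop :=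
  (0 : Fin p → ℕ) ∈ S ∧ ∀ x ∈ S, ∀ y ∈ S, x + y ∈ S

/-- `s` is a minimal generator of `S`: it is a nonzero element of `S` that is not a
sum of two nonzero elements of `S`. -/
def IsMinGen {p : ℕ} (S : Set (Fin p → ℕ)) (s : Fin p → ℕ) : Prop :=
  s ∈ S ∧ s ≠ 0 ∧ ∀ a ∈ S, ∀ b ∈ S, a ≠ 0 → b ≠ 0 → a + b ≠ s

/-- The (unique) minimal generating set of `S`. -/
def minGens {p : ℕ} (S : Set (Fin p → ℕ)) : Set (Fin p → ℕ) :=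
  {s | IsMinGen S s}

/-- `prec` is (the strict part of) a monomial order on `ℕ^p` all of whose initial
segments are finite. -/
def IsMonomialOrder {p : ℕ} (prec : (Fin p → ℕ) → (Fin p → ℕ) → Prop) : Prop :=
  (∀ a, ¬ prec a a) ∧
  (∀ a b c, prec a b → prec b c → prec a c) ∧
  (∀ a b, a ≠ b → prec a b ∨ prec b a) ∧
  (∀ a b c, prec a b → prec (a + c) (b + c)) ∧
  (∀ c, c ≠ (0 : Fin p → ℕ) → prec 0 c) ∧
  (∀ a, {b | prec b a}.Finite)

/-- The semigroup $S = ⟨(1,1)⟩ ∪ (C \setminus [0,b]×[0,a])$ where $C$ is the cone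
generated by $(1,0)$ and $(1,1)$. -/
def S18 (a b : ℕ) : Set (Fin 2 → ℕ) :=
  {v | (∃ k : ℕ, v = k • ![1, 1]) ∨ (v 1 ≤ v 0 ∧ (b < v 0 ∨ a < v 1))}

/-- The set of gaps of `S18 a b`: integer points of the cone not in the semigroup. -/
def H18 (a b : ℕ) : Set (Fin 2 → ℕ) :=
  {v | v 1 ≤ v 0 ∧ v ∉ S18 a b}


/-!
The gaps are the points `(x, y)` with `y < x ≤ b` and `y ≤ a`, so `g ≤ b (a + 1)`. The points
`(1, 1)` and `(k, 0)` with `b < k ≤ 2b + 1` are minimal generators, so `e ≥ b + 2`. Since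
`a < b`, the point `(b, a)` is a gap lying componentwise strictly above the diagonal points
`(k, k)` with `k ≤ a`; a monomial order refines the componentwise order, so these `a + 1`
elements of `S` precede `Fb` and `n ≥ a + 1`. Then `n e ≥ n b + 2n ≥ (a + 1) b + n + 1 ≥ g + n + 1`.
-/

theorem IsMonomialOrder.prec_of_lt {p : ℕ} {prec : (Fin p → ℕ) → (Fin p → ℕ) → Prop}
    (hprec : IsMonomialOrder prec) {u v : Fin p → ℕ} (huv : u < v) : prec u v := by
  obtain ⟨-, -, -, hadd, hzero, -⟩ := hprec
  have hpos : v - u ≠ 0 := fun h => huv.not_ge (tsub_eq_zero_iff_le.1 h)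
  simpa [tsub_add_cancel_of_le huv.le] using hadd 0 (v - u) u (hzero _ hpos)

lemma fin2_ext {α : Type*} {u v : Fin 2 → α} (h0 : u 0 = v 0) (h1 : u 1 = v 1) : u = v :=
  funext (Fin.forall_fin_two.2 ⟨h0, h1⟩)

lemma ne_zero_iff_fin2 {α : Type*} [Zero α] {v : Fin 2 → α} : v ≠ 0 ↔ v 0 ≠ 0 ∨ v 1 ≠ 0 := by
  rw [Ne, ← not_and_or, not_iff_not]
  exact ⟨fun h => by simp [h], fun h => fin2_ext h.1 h.2⟩

section S18

variable (a b : ℕ)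

lemma mem_S18_iff (v : Fin 2 → ℕ) :
    v ∈ S18 a b ↔ v 1 ≤ v 0 ∧ (v 0 = v 1 ∨ b < v 0 ∨ a < v 1) := by
  constructor
  · rintro (⟨k, rfl⟩ | ⟨hcone, hout⟩)
    · simp
    · exact ⟨hcone, Or.inr hout⟩
  · rintro ⟨hcone, hdiag | hout⟩
    · exact Or.inl ⟨v 0, fin2_ext (by simp) (by simp [hdiag])⟩
    · exact Or.inr ⟨hcone, hout⟩

lemma mem_H18_iff (v : Fin 2 → ℕ) : v ∈ H18 a b ↔ v 1 < v 0 ∧ v 0 ≤ b ∧ v 1 ≤ a := by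
  simp only [H18, Set.mem_ofPred_eq, mem_S18_iff]
  omega

lemma isSubmonoidSet_S18 : IsSubmonoidSet (S18 a b) := by
  refine ⟨by simp [mem_S18_iff], fun x hx y hy => ?_⟩
  rw [mem_S18_iff] at hx hy ⊢
  simp only [Pi.add_apply]
  omega

lemma S18_subset_cone : ∀ v ∈ S18 a b, v 1 ≤ v 0 :=
  fun v hv => ((mem_S18_iff a b v).1 hv).1

lemma H18_finite : (H18 a b).Finite :=
  (Set.finite_Iic fun _ => b).subset fun v hv => by
    rw [mem_H18_iff] at hv
    exact Fin.forall_fin_two.2 ⟨hv.2.1, hv.1.le.trans hv.2.1⟩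

lemma ncard_H18_le : (H18 a b).ncard ≤ b * (a + 1) := by
  have hmaps : ∀ v ∈ H18 a b,
      (v 0, v 1) ∈ (↑(Finset.Ioc 0 b ×ˢ Finset.Iic a) : Set (ℕ × ℕ)) := by
    intro v hv
    rw [mem_H18_iff] at hv
    simp only [Finset.coe_product, Set.mem_prod, Finset.mem_coe, Finset.mem_Ioc,
      Finset.mem_Iic]
    omega
  have hinj : Set.InjOn (fun v : Fin 2 → ℕ => (v 0, v 1)) (H18 a b) :=
    fun u _ v _ h => fin2_ext (congrArg Prod.fst h) (congrArg Prod.snd h)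
  calc (H18 a b).ncard ≤ (↑(Finset.Ioc 0 b ×ˢ Finset.Iic a) : Set (ℕ × ℕ)).ncard :=
        Set.ncard_le_ncard_of_injOn _ hmaps hinj
    _ = b * (a + 1) := by
        rw [Set.ncard_coe_finset, Finset.card_product, Nat.card_Ioc, Nat.card_Iic,
          Nat.sub_zero]

lemma diag_mem_minGens_S18 : ![1, 1] ∈ minGens (S18 a b) := by
  refine ⟨(mem_S18_iff a b _).2 (by simp), by simp, ?_⟩
  intro u hu w hw hu0 hw0 hsum
  have h0 : u 0 + w 0 = 1 := by simpa using congrFun hsum 0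
  have := S18_subset_cone a b u hu
  have := S18_subset_cone a b w hw
  rw [ne_zero_iff_fin2] at hu0 hw0
  omega

lemma axis_mem_minGens_S18 {k : ℕ} (hk : k ∈ Finset.Ioc b (2 * b + 1)) :
    ![k, 0] ∈ minGens (S18 a b) := by
  rw [Finset.mem_Ioc] at hk
  refine ⟨(mem_S18_iff a b _).2 (by simp; omega), by simp; omega, ?_⟩
  intro u hu w hw hu0 hw0 hsum
  have h0 : u 0 + w 0 = k := by simpa using congrFun hsum 0
  have h1 : u 1 + w 1 = 0 := by simpa using congrFun hsum 1
  rw [mem_S18_iff] at hu hw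
  rw [ne_zero_iff_fin2] at hu0 hw0
  omega

lemma minGens_S18_finite : (minGens (S18 a b)).Finite := by
  refine (Set.finite_Iic fun _ => 2 * b + 1).subset fun v ⟨hvS, _, hmin⟩ => ?_
  have hcone := S18_subset_cone a b v hvS
  suffices hv0 : v 0 ≤ 2 * b + 1 from Fin.forall_fin_two.2 ⟨hv0, hcone.trans hv0⟩
  by_contra! hlarge
  -- peel off `(b + 1, 0)` on the axis, and `(1, 1)` otherwise
  rcases Nat.eq_zero_or_pos (v 1) with hv1 | hv1
  · refine hmin ![b + 1, 0] ?_ ![v 0 - (b + 1), 0] ?_ ?_ ?_ (fin2_ext ?_ ?_) <;>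
      simp [mem_S18_iff] <;> omega
  · refine hmin ![1, 1] ?_ (v - 1) ?_ ?_ ?_ (fin2_ext ?_ ?_) <;>
      simp [mem_S18_iff, ne_zero_iff_fin2] <;> omega

lemma le_ncard_minGens_S18 : b + 2 ≤ (minGens (S18 a b)).ncard := by
  let G : Finset (Fin 2 → ℕ) :=
    insert ![1, 1] ((Finset.Ioc b (2 * b + 1)).image fun k => ![k, 0])
  have hcard : G.card = b + 2 := by
    rw [Finset.card_insert_of_notMem (by simp),
      Finset.card_image_of_injective _ fun x y h => by simpa using congrFun h 0,
      Nat.card_Ioc]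
    omega
  have hG : (G : Set (Fin 2 → ℕ)) ⊆ minGens (S18 a b) := by
    intro v hv
    simp only [G, Finset.coe_insert, Finset.coe_image, Set.mem_insert_iff,
      Set.mem_image, Finset.mem_coe] at hv
    rcases hv with rfl | ⟨k, hk, rfl⟩
    · exact diag_mem_minGens_S18 a b
    · exact axis_mem_minGens_S18 a b hk
  rw [← hcard, ← Set.ncard_coe_finset]
  exact Set.ncard_le_ncard hG (minGens_S18_finite a b)

lemma le_ncard_S18_prec {prec : (Fin 2 → ℕ) → (Fin 2 → ℕ) → Prop}
    (hprec : IsMonomialOrder prec) (hab : a < b) {Fb : Fin 2 → ℕ}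
    (hFb : ∀ x ∈ H18 a b, x ≠ Fb → prec x Fb) :
    a + 1 ≤ {x : Fin 2 → ℕ | x ∈ S18 a b ∧ prec x Fb}.ncard := by
  have ⟨_, htrans, _, _, _, hfinite⟩ := hprec
  have hgap : ![b, a] ∈ H18 a b := by simp [mem_H18_iff, hab]
  have hprec_Fb : ∀ k ≤ a, prec (k • ![1, 1]) Fb := by
    intro k hk
    have hlt : prec (k • ![1, 1]) ![b, a] := hprec.prec_of_lt <|
      Pi.lt_def.2 ⟨Fin.forall_fin_two.2 ⟨by simp; omega, by simpa⟩, 0, by simp; omega⟩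
    by_cases hFb_eq : ![b, a] = Fb
    · exact hFb_eq ▸ hlt
    · exact htrans _ _ _ hlt (hFb _ hgap hFb_eq)
  have hinj : Function.Injective fun k : ℕ => (k • ![1, 1] : Fin 2 → ℕ) :=
    fun x y h => by simpa using congrFun h 0
  calc a + 1 = ((fun k : ℕ => k • ![1, 1]) '' Set.Iic a).ncard := by
        rw [Set.ncard_image_of_injective _ hinj, ← Finset.coe_Iic, Set.ncard_coe_finset,
          Nat.card_Iic]
    _ ≤ _ := by
        refine Set.ncard_le_ncard ?_ ((hfinite Fb).subset fun x hx => hx.2)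
        rintro _ ⟨k, hk, rfl⟩
        exact ⟨Or.inl ⟨k, rfl⟩, hprec_Fb k hk⟩

end S18

theorem stmt19 (prec : (Fin 2 → ℕ) → (Fin 2 → ℕ) → Prop) (hprec : IsMonomialOrder prec)
    (a b : ℕ) (hab : a < b)
    (Fb : Fin 2 → ℕ)
    (hFb : Fb ∈ H18 a b ∧ ∀ x ∈ H18 a b, x ≠ Fb → prec x Fb) :
    IsSubmonoidSet (S18 a b) ∧
    (∀ v ∈ S18 a b, v 1 ≤ v 0) ∧
    (H18 a b).Finite ∧
    {x : Fin 2 → ℕ | x ∈ S18 a b ∧ prec x Fb}.ncard + (H18 a b).ncard + 1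
      ≤ {x : Fin 2 → ℕ | x ∈ S18 a b ∧ prec x Fb}.ncard * (minGens (S18 a b)).ncard := by
  refine ⟨isSubmonoidSet_S18 a b, S18_subset_cone a b, H18_finite a b, ?_⟩
  have hn := le_ncard_S18_prec a b hprec hab hFb.2
  have he := le_ncard_minGens_S18 a b
  have hg := ncard_H18_le a b
  set n := {x : Fin 2 → ℕ | x ∈ S18 a b ∧ prec x Fb}.ncard
  calc n + (H18 a b).ncard + 1 ≤ n * b + 2 * n := by nlinarith
    _ = n * (b + 2) := by ring
    _ ≤ n * (minGens (S18 a b)).ncard := Nat.mul_le_mul_left n he
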